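/- With F as above, the clause set (F ∪ {¬a}) \ {a} (adding the unit clause ¬a and removing the unit clause a) is satisfiable if and only if G is satisfiable. -/
import Mathlib


abbrev Var := ℕ
abbrev Lit := Var × Bool
abbrev Clause := Set Lit
abbrev Interp := Var → Bool

def SatClause (I : Interp) (c : Clause) : Prop := ∃ l ∈ c, I l.1 = l.2
def Model (I : Interp) (F : Set Clause) : Prop := ∀ c ∈ F, SatClause I c
def Satisfiable (F : Set Clause) : Prop := ∃ I : Interp, Model I F
def VarsF (F : Set Clause) : Set Var := ⋃ c ∈ F, Prod.fst '' c
def AddLit (l : Lit) (G : Set Clause) : Set Clause := (insert l) '' G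

def ClOr (A B : Set Clause) : Set Clause := {c | ∃ α ∈ A, ∃ β ∈ B, c = α ∪ β}

def UnitPos (S : Set Var) : Set Clause := {c | ∃ x ∈ S, c = {(x, true)}}

/-- `F = {a} ∪ ((X ∪ {a}) ∨ (G ∪ {¬a}))`. -/
def Fdef (X : Set Var) (a : Var) (G : Set Clause) : Set Clause :=
  insert {(a, true)} (ClOr (UnitPos (insert a X)) (insert {(a, false)} G))

/-- With `F` as above, the clause set `(F ∪ {¬a}) \ {a}` (adding the unit clause `¬a`
and removing the unit clause `a`) is satisfiable iff `G` is satisfiable. -/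
theorem stmt4 (X : Set Var) (G : Set Clause) (a : Var)
    (hG : VarsF G ⊆ X) (ha : a ∉ X) (hne : ∀ γ ∈ G, γ.Nonempty) :
    Satisfiable (insert {(a, false)} (Fdef X a G \ {({(a, true)} : Clause)})) ↔
      Satisfiable G := by
  constructor
  · rintro ⟨I, hI⟩
    refine ⟨I, fun γ hγ => ?_⟩
    have hIa : I a = false := by
      obtain ⟨l, hl, hv⟩ := hI _ (Set.mem_insert _ _)
      rcases hl with rfl
      exact hv
    have hc : ({(a, true)} ∪ γ : Clause) ∈
        insert {(a, false)} (Fdef X a G \ {({(a, true)} : Clause)}) := by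
      refine Set.mem_insert_iff.2 (Or.inr ⟨Set.mem_insert_iff.2 (Or.inr
        ⟨{(a, true)}, ⟨a, Set.mem_insert _ _, rfl⟩, γ, Set.mem_insert_iff.2 (Or.inr hγ), rfl⟩), ?_⟩)
      intro h
      simp only [Set.mem_singleton_iff] at h
      obtain ⟨l, hl⟩ := hne γ hγ
      have hla : l = (a, true) := by
        have : l ∈ ({(a, true)} ∪ γ : Clause) := Or.inr hl
        rw [h] at this
        exact this
      apply ha
      apply hG
      exact Set.mem_biUnion hγ ⟨l, hl, by rw [hla]⟩
    obtain ⟨l, hl, hv⟩ := hI _ hc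
    rcases hl with hl | hl
    · rcases hl with rfl
      simp [hIa] at hv
    · exact ⟨l, hl, hv⟩
  · rintro ⟨I, hI⟩
    refine ⟨fun x => if x = a then false else I x, fun c hc => ?_⟩
    rcases hc with rfl | ⟨hc, hne'⟩
    · exact ⟨(a, false), rfl, by simp⟩
    · rcases hc with rfl | ⟨α, ⟨x, _, rfl⟩, β, hβ, rfl⟩
      · exact absurd rfl hne'
      · rcases hβ with rfl | hβG
        · exact ⟨(a, false), Or.inr rfl, by simp⟩
        · obtain ⟨l, hl, hv⟩ := hI β hβG
          refine ⟨l, Or.inr hl, ?_⟩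
          have hla : l.1 ≠ a := fun h =>
            ha (hG (Set.mem_biUnion hβG ⟨l, hl, h⟩))
          simpa [hla] using hv
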